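/- arXiv:1212.6534 — 6 statements merged into one kernel-verified Lean document; each statement's English description precedes it below -/
import Mathlib

section
/- There is no choice of smooth functions f, g, h, r for which the generalized anisotropic Kuramoto–Sivashinsky equation u_t = (1/2)u_x² + h(u)u_y² + r(u)u_xx + g(u)u_yy − u_xxxx − 2u_xxyy − u_yyyy + f(u) is strictly self-adjoint. Concretely: there do not exist smooth f, g, h, r and a smooth function λ (of x, y, t, u and derivatives of u) such that the expression obtained by substituting v = u into the adjoint equation and eliminating u_t via the equation equals λ·Δ identically; equivalently, the identity (h(u) − 2g'(u))u_y² − 2g(u)u_yy + 2u_yyyy + (1/2)(1 − 4r'(u))u_x² − 2r(u)u_xx − u(f'(u) + (g''(u) − h'(u))u_y² + 2(g'(u) − h(u))u_yy + r''(u)u_x² + (2r'(u) − 1)u_xx) + 4u_xxyy + 2u_xxxx − f(u) ≡ 0 cannot hold for all values of u and its derivative symbols treated as independent variables. -/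
/-- There is no choice of smooth functions `f, g, h, r` for which the generalized
anisotropic Kuramoto–Sivashinsky equation is strictly self-adjoint: the identity
obtained by substituting `v = u` into the adjoint equation and eliminating `u_t`
cannot vanish identically in the jet variables. -/
theorem no_strict_self_adjointness :
    ¬ ∃ f g h r : ℝ → ℝ,
      ContDiff ℝ (⊤ : ℕ∞) f ∧ ContDiff ℝ (⊤ : ℕ∞) g ∧ ContDiff ℝ (⊤ : ℕ∞) h ∧ ContDiff ℝ (⊤ : ℕ∞) r ∧
      ∀ u ux uy uxx uyy uxxxx uxxyy uyyyy : ℝ,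
        (h u - 2 * deriv g u) * uy ^ 2 - 2 * g u * uyy + 2 * uyyyy
          + (1 / 2) * (1 - 4 * deriv r u) * ux ^ 2 - 2 * r u * uxx
          - u * (deriv f u + (iteratedDeriv 2 g u - deriv h u) * uy ^ 2
              + 2 * (deriv g u - h u) * uyy + iteratedDeriv 2 r u * ux ^ 2
              + (2 * deriv r u - 1) * uxx)
          + 4 * uxxyy + 2 * uxxxx - f u = 0 := by
  rintro ⟨f, g, h, r, -, -, -, -, H⟩
  have h0 := H 0 0 0 0 0 0 0 0
  have h1 := H 0 0 0 0 0 0 0 1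
  nlinarith [h0, h1]
end

section
/- For the generalized anisotropic Kuramoto–Sivashinsky equation u_t = (1/2)u_x² + h(u)u_y² + r(u)u_xx + g(u)u_yy − u_xxxx − 2u_xxyy − u_yyyy + f(u), if a nonzero smooth function φ(u) makes the substitution v = φ(u) into the adjoint equation (after eliminating u_t via the equation) vanish identically in the jet variables, then φ is a nonzero constant, f is constant, r(u) = u/2 + c₂ for some constant c₂, and h = g'. Conversely, with these choices and φ constant, the condition holds. -/
/-- Quasi self-adjointness classification: for the generalized anisotropic
Kuramoto–Sivashinsky equation, a nowhere-zero smooth substitution `v = φ(u)`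
makes the adjoint equation (after eliminating `u_t` via the equation) vanish
identically in the jet variables if and only if `φ` is a (nonzero) constant,
`f` is constant, `r(u) = u/2 + c₂` and `h = g'`. -/
theorem quasi_self_adjoint_classification
    (f g h r φ : ℝ → ℝ)
    (hf : ContDiff ℝ (⊤ : ℕ∞) f) (hg : ContDiff ℝ (⊤ : ℕ∞) g) (hh : ContDiff ℝ (⊤ : ℕ∞) h)
    (hr : ContDiff ℝ (⊤ : ℕ∞) r) (hφ : ContDiff ℝ (⊤ : ℕ∞) φ) (hφ0 : ∀ u, φ u ≠ 0) :
    (∀ u ux uy uxx uyy uxy uyyy uxxy uxyy uxxx uyyyy uxxyy uxxxx : ℝ,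
        ((h u - 2 * deriv g u) * deriv φ u + φ u * (deriv h u - iteratedDeriv 2 g u)
            - g u * iteratedDeriv 2 φ u + 6 * iteratedDeriv 3 φ u * uyy
            + 2 * iteratedDeriv 3 φ u * uxx) * uy ^ 2
        + (φ u * (1 - 2 * deriv r u) - 2 * r u * deriv φ u
            + 2 * iteratedDeriv 2 φ u * uyy) * uxx
        + 4 * deriv φ u * uxxyy + 2 * iteratedDeriv 4 φ u * uy ^ 2 * ux ^ 2
        + ((1 / 2) * ((1 - 4 * deriv r u) * deriv φ u
            - 2 * (φ u * iteratedDeriv 2 r u + r u * iteratedDeriv 2 φ u))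
            + 2 * iteratedDeriv 3 φ u * (uyy + 3 * uxx)) * ux ^ 2
        + 3 * iteratedDeriv 2 φ u * uyy ^ 2 + 2 * deriv φ u * uyyyy
        + iteratedDeriv 4 φ u * ux ^ 4 + 4 * iteratedDeriv 2 φ u * uxy ^ 2
        + 3 * iteratedDeriv 2 φ u * uxx ^ 2 + 2 * deriv φ u * uxxxx
        - (φ u * deriv f u + f u * deriv φ u) + iteratedDeriv 4 φ u * uy ^ 4
        + (2 * φ u * (h u - deriv g u) - 2 * g u * deriv φ u) * uyy
        + 4 * iteratedDeriv 2 φ u * (uyyy + uxxy) * uy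
        + 4 * (2 * iteratedDeriv 3 φ u * uy * uxy + iteratedDeriv 2 φ u * uxyy
            + iteratedDeriv 2 φ u * uxxx) * ux = 0)
    ↔ ((∃ k : ℝ, k ≠ 0 ∧ ∀ u, φ u = k) ∧ (∃ c₁ : ℝ, ∀ u, f u = c₁)
        ∧ (∃ c₂ : ℝ, ∀ u, r u = u / 2 + c₂) ∧ (∀ u, h u = deriv g u)) := by
  constructor
  · intro H
    -- Step 1: deriv φ = 0 everywhere.
    have hφ' : ∀ u, deriv φ u = 0 := by
      intro u
      have A := H u 0 0 0 0 0 0 0 0 0 0 0 0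
      have B := H u 0 0 0 0 0 0 0 0 0 0 1 0
      ring_nf at A B
      linarith
    have hφfun : deriv φ = fun _ => 0 := funext hφ'
    have hφ2 : iteratedDeriv 2 φ = fun _ => 0 := by
      rw [show (2 : ℕ) = 1 + 1 from rfl, iteratedDeriv_succ, iteratedDeriv_one, hφfun]
      simp
    -- φ is constant
    have hφconst : ∀ u, φ u = φ 0 := by
      intro u
      exact is_const_of_deriv_eq_zero (hφ.differentiable (by simp)) hφ' u 0
    -- f' = 0
    have hf' : ∀ u, deriv f u = 0 := by
      intro u
      have A := H u 0 0 0 0 0 0 0 0 0 0 0 0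
      ring_nf at A
      have h1 : φ u * deriv f u = 0 := by
        rw [hφ' u] at A; linarith
      exact (mul_eq_zero.mp h1).resolve_left (hφ0 u)
    -- r' = 1/2
    have hr' : ∀ u, deriv r u = 1 / 2 := by
      intro u
      have C := H u 0 0 1 0 0 0 0 0 0 0 0 0
      ring_nf at C
      have h1 := hφ' u
      have h2 : iteratedDeriv 2 φ u = 0 := by rw [hφ2]
      have h3 := hf' u
      rw [h1, h2, h3] at C
      have h4 : φ u * (1 - 2 * deriv r u) = 0 := by ring_nf; ring_nf at C; linarith
      have h5 : (1 : ℝ) - 2 * deriv r u = 0 :=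
        (mul_eq_zero.mp h4).resolve_left (hφ0 u)
      linarith
    -- h = g'
    have hhg : ∀ u, h u = deriv g u := by
      intro u
      have D := H u 0 0 0 1 0 0 0 0 0 0 0 0
      ring_nf at D
      have h1 := hφ' u
      have h2 : iteratedDeriv 2 φ u = 0 := by rw [hφ2]
      have h3 := hf' u
      rw [h1, h2, h3] at D
      have h4 : 2 * φ u * (h u - deriv g u) = 0 := by ring_nf; ring_nf at D; linarith
      have h5 : φ u * (h u - deriv g u) = 0 := by linarith
      have h6 := (mul_eq_zero.mp h5).resolve_left (hφ0 u)
      linarith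
    refine ⟨⟨φ 0, hφ0 0, hφconst⟩, ⟨f 0, fun u => ?_⟩, ⟨r 0, fun u => ?_⟩, hhg⟩
    · exact is_const_of_deriv_eq_zero (hf.differentiable (by simp)) hf' u 0
    · have key : ∀ x y : ℝ, r x - x / 2 = r y - y / 2 := by
        apply is_const_of_deriv_eq_zero
        · exact (hr.differentiable (by simp)).sub (differentiable_id.div_const 2)
        · intro x
          have : deriv (fun u : ℝ => r u - u / 2) x
              = deriv r x - deriv (fun u : ℝ => u / 2) x := by
            apply deriv_fun_sub ((hr.differentiable (by simp)) x)
            exact (differentiable_id.div_const 2) x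
          rw [this, hr' x]
          simp [deriv_div_const]
      have := key u 0
      simp at this ⊢
      linarith
  · rintro ⟨⟨k, hk, hφk⟩, ⟨c₁, hfc⟩, ⟨c₂, hrc⟩, hhg⟩
    have hφe : φ = fun _ => k := funext hφk
    have hfe : f = fun _ => c₁ := funext hfc
    have hre : r = fun u => u / 2 + c₂ := funext hrc
    have hhe : h = deriv g := funext hhg
    subst hφe hfe hre hhe
    have e1 : deriv (fun _ : ℝ => k) = fun _ => 0 := by funext u; simp
    have e2 : iteratedDeriv 2 (fun _ : ℝ => k) = fun _ => (0 : ℝ) := by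
      simp [iteratedDeriv_succ', deriv_const']
    have e3 : iteratedDeriv 3 (fun _ : ℝ => k) = fun _ => (0 : ℝ) := by
      simp [iteratedDeriv_succ', deriv_const']
    have e4 : iteratedDeriv 4 (fun _ : ℝ => k) = fun _ => (0 : ℝ) := by
      simp [iteratedDeriv_succ', deriv_const']
    have ef : deriv (fun _ : ℝ => c₁) = fun _ => 0 := by funext u; simp
    have er1 : deriv (fun u : ℝ => u / 2 + c₂) = fun _ => 1 / 2 := by
      funext u; simp [deriv_add_const]
    have er2 : iteratedDeriv 2 (fun u : ℝ => u / 2 + c₂) = fun _ => (0 : ℝ) := by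
      rw [show (2 : ℕ) = 1 + 1 from rfl, iteratedDeriv_succ, iteratedDeriv_one, er1]
      simp
    have eg : ∀ u, deriv (deriv g) u = iteratedDeriv 2 g u := by
      intro u
      rw [show (2 : ℕ) = 1 + 1 from rfl, iteratedDeriv_succ, iteratedDeriv_one]
    intro u ux uy uxx uyy uxy uyyy uxxy uxyy uxxx uyyyy uxxyy uxxxx
    rw [e1, e2, e3, e4, ef, er1, er2, eg]
    ring
end

section
/- Suppose φ : ℝ³ → ℝ is smooth and nonzero, g is smooth with g'' ≠ 0 somewhere, f is smooth, and for all (x,y,t,u): φ(x,y,t) f'(u) + φ_t + g(u) φ_yy − φ_yyyy + (u/2 + c) φ_xx − 2φ_xxyy − φ_xxxx = 0. If moreover f(u) = β u² + γ u + δ + c₀·∫g(u)du (an antiderivative of g scaled by a constant c₀) with β ≠ 0, then φ necessarily satisfies the linear system φ_yy = −c₀ φ, φ_xx = −4β φ, and γ φ + φ_t − φ_yyyy + c φ_xx − 2φ_xxyy − φ_xxxx = 0. -/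
noncomputable section

def px (f : ℝ → ℝ → ℝ → ℝ) : ℝ → ℝ → ℝ → ℝ := fun x y t => deriv (fun s => f s y t) x
def py (f : ℝ → ℝ → ℝ → ℝ) : ℝ → ℝ → ℝ → ℝ := fun x y t => deriv (fun s => f x s t) y
def pt (f : ℝ → ℝ → ℝ → ℝ) : ℝ → ℝ → ℝ → ℝ := fun x y t => deriv (fun s => f x y s) t

/-- In the nonlinear self-adjointness analysis with `r(u) = u/2 + c`, `h = g'`
and `f(u) = βu² + γu + δ + c₀·G(u)` (`G` an antiderivative of `g`), `β ≠ 0`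
and `g''` not identically zero, the substitution `φ(x,y,t)` must satisfy
`φ_yy = −c₀ φ`, `φ_xx = −4β φ` and the remaining linear equation. -/
theorem nonlinear_self_adjoint_case
    (g G f : ℝ → ℝ) (c c₀ β γ δ : ℝ) (φ : ℝ → ℝ → ℝ → ℝ)
    (hg : ContDiff ℝ (⊤ : ℕ∞) g)
    (hφ : ContDiff ℝ (⊤ : ℕ∞) (fun p : ℝ × ℝ × ℝ => φ p.1 p.2.1 p.2.2))
    (hφ0 : ∃ x y t : ℝ, φ x y t ≠ 0)
    (hG : ∀ u : ℝ, HasDerivAt G (g u) u)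
    (hg'' : ∃ u : ℝ, iteratedDeriv 2 g u ≠ 0)
    (hβ : β ≠ 0)
    (hfdef : ∀ u : ℝ, f u = β * u ^ 2 + γ * u + δ + c₀ * G u)
    (hcond : ∀ x y t u : ℝ,
      φ x y t * deriv f u + pt φ x y t + g u * py (py φ) x y t
        - py (py (py (py φ))) x y t + (u / 2 + c) * px (px φ) x y t
        - 2 * px (px (py (py φ))) x y t - px (px (px (px φ))) x y t = 0) :
    ∀ x y t : ℝ,
      (py (py φ) x y t = -c₀ * φ x y t) ∧
      (px (px φ) x y t = -(4 * β) * φ x y t) ∧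
      (γ * φ x y t + pt φ x y t - py (py (py (py φ))) x y t
        + c * px (px φ) x y t - 2 * px (px (py (py φ))) x y t
        - px (px (px (px φ))) x y t = 0) := by
  have hfeq : f = fun u => β * u ^ 2 + γ * u + δ + c₀ * G u := funext hfdef
  have hf' : ∀ u : ℝ, deriv f u = 2 * β * u + γ + c₀ * g u := by
    intro u
    have h1 : HasDerivAt (fun u : ℝ => β * u ^ 2) (β * (2 * u)) u := by
      simpa using (hasDerivAt_pow 2 u).const_mul β
    have h2 : HasDerivAt (fun u : ℝ => γ * u) γ u := by
      simpa using (hasDerivAt_id u).const_mul γ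
    have h3 : HasDerivAt (fun _ : ℝ => δ) 0 u := hasDerivAt_const u δ
    have h4 : HasDerivAt (fun u : ℝ => c₀ * G u) (c₀ * g u) u := (hG u).const_mul c₀
    have h := (((h1.add h2).add h3).add h4)
    rw [hfeq]
    have := h.deriv
    erw [this]; ring
  intro x y t
  set P := φ x y t with hP
  set A := 2 * β * P + px (px φ) x y t / 2 with hA
  set B := c₀ * P + py (py φ) x y t with hB
  set C := γ * P + pt φ x y t - py (py (py (py φ))) x y t + c * px (px φ) x y t
      - 2 * px (px (py (py φ))) x y t - px (px (px (px φ))) x y t with hC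
  have key : ∀ u : ℝ, A * u + B * g u + C = 0 := by
    intro u
    have h := hcond x y t u
    rw [hf'] at h
    rw [hA, hB, hC]
    nlinarith [h]
  have hB0 : B = 0 := by
    by_contra hB0
    obtain ⟨u₀, hu₀⟩ := hg''
    apply hu₀
    have hgaff : g = fun u => (-A / B) * u + (-C / B) := by
      funext u
      have h1 : (-A / B) * u + (-C / B) = (-(A * u) - C) / B := by ring
      rw [h1, eq_div_iff hB0]
      nlinarith [key u]
    rw [hgaff]
    have hd1 : deriv (fun u : ℝ => (-A / B) * u + (-C / B)) = fun _ => -A / B := by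
      funext v
      have : HasDerivAt (fun u : ℝ => (-A / B) * u + (-C / B)) (-A / B) v := by
        simpa using (((hasDerivAt_id v).const_mul (-A / B)).add_const (-C / B))
      exact this.deriv
    rw [show (2 : ℕ) = 1 + 1 from rfl, iteratedDeriv_succ, iteratedDeriv_one, hd1]
    simp
  have hC0 : C = 0 := by have := key 0; simp [hB0] at this; linarith
  have hA0 : A = 0 := by have := key 1; rw [hB0, hC0] at this; linarith
  refine ⟨by rw [hB] at hB0; linarith, by rw [hA] at hA0; linarith, by rw [hC] at hC0; linarith⟩
end
end

section
/- Let α, β ∈ ℝ with α ≠ 0. The function φ(x,y,t) = e^{−αt}((c₁ + c₂x)y + c₃ + c₄x), for any constants c₁, c₂, c₃, c₄, satisfies the nonlinear self-adjointness condition φ·α + φ_t + g(u)φ_yy − φ_yyyy + (u/2 + γ)φ_xx − 2φ_xxyy − φ_xxxx = 0 for every real u, corresponding to the case f(u) = αu + β, r(u) = u/2 + γ, h = g' of the generalized anisotropic Kuramoto–Sivashinsky equation. -/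
noncomputable section

/-- The substitution `φ(x,y,t) = e^{−αt}((c₁ + c₂x)y + c₃ + c₄x)`. -/
def Φ (α c₁ c₂ c₃ c₄ : ℝ) : ℝ → ℝ → ℝ → ℝ :=
  fun x y t => Real.exp (-α * t) * ((c₁ + c₂ * x) * y + c₃ + c₄ * x)

lemma deriv_affine (a b : ℝ) (s : ℝ) : deriv (fun u : ℝ => a * u + b) s = a := by
  have h : (fun u : ℝ => a * u + b) = fun u => u * a + b := by funext u; ring
  rw [h]; simp

lemma pxΦ (α c₁ c₂ c₃ c₄ : ℝ) :
    px (Φ α c₁ c₂ c₃ c₄) = fun x y t => Real.exp (-α * t) * (c₂ * y + c₄) := by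
  funext x y t
  have h : (fun s => Φ α c₁ c₂ c₃ c₄ s y t)
      = fun s => (Real.exp (-α * t) * (c₂ * y + c₄)) * s
          + Real.exp (-α * t) * (c₁ * y + c₃) := by
    funext s; simp only [Φ]; ring
  rw [px, h]; exact deriv_affine _ _ _

lemma pyΦ (α c₁ c₂ c₃ c₄ : ℝ) :
    py (Φ α c₁ c₂ c₃ c₄) = fun x y t => Real.exp (-α * t) * (c₁ + c₂ * x) := by
  funext x y t
  have h : (fun s => Φ α c₁ c₂ c₃ c₄ x s t)
      = fun s => (Real.exp (-α * t) * (c₁ + c₂ * x)) * s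
          + Real.exp (-α * t) * (c₃ + c₄ * x) := by
    funext s; simp only [Φ]; ring
  rw [py, h]; exact deriv_affine _ _ _

lemma ptΦ (α c₁ c₂ c₃ c₄ : ℝ) :
    pt (Φ α c₁ c₂ c₃ c₄) = fun x y t => -α * Φ α c₁ c₂ c₃ c₄ x y t := by
  funext x y t
  have h : (fun s => Φ α c₁ c₂ c₃ c₄ x y s)
      = fun s => ((c₁ + c₂ * x) * y + c₃ + c₄ * x) * Real.exp (-α * s) := by
    funext s; simp only [Φ]; ring
  simp only [pt, h]
  rw [deriv_const_mul _ (by exact (Real.differentiable_exp.comp (differentiable_id.const_mul _)).differentiableAt)]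
  have hd : HasDerivAt (fun s => Real.exp (-α * s)) (Real.exp (-α*t) * (-α * 1)) t :=
    ((hasDerivAt_id t).const_mul (-α)).exp
  rw [hd.deriv]
  simp [Φ]; ring

lemma pxx (α c₁ c₂ c₃ c₄ : ℝ) : px (px (Φ α c₁ c₂ c₃ c₄)) = fun _ _ _ => 0 := by
  rw [pxΦ]; funext x y t; simp [px]

lemma pyy (α c₁ c₂ c₃ c₄ : ℝ) : py (py (Φ α c₁ c₂ c₃ c₄)) = fun _ _ _ => 0 := by
  rw [pyΦ]; funext x y t; simp [py]

/-- `φ(x,y,t) = e^{−αt}((c₁ + c₂x)y + c₃ + c₄x)` satisfies the nonlinear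
self-adjointness condition for the case `f(u) = αu + β`, `r(u) = u/2 + γ`,
`h = g'` of the generalized anisotropic Kuramoto–Sivashinsky equation. -/
theorem phi_nonlinear_self_adjointness
    (α β γ : ℝ) (hα : α ≠ 0) (g : ℝ → ℝ) (hg : ContDiff ℝ (⊤ : ℕ∞) g)
    (c₁ c₂ c₃ c₄ : ℝ) :
    ∀ x y t u : ℝ,
      Φ α c₁ c₂ c₃ c₄ x y t * α + pt (Φ α c₁ c₂ c₃ c₄) x y t
        + g u * py (py (Φ α c₁ c₂ c₃ c₄)) x y t
        - py (py (py (py (Φ α c₁ c₂ c₃ c₄)))) x y t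
        + (u / 2 + γ) * px (px (Φ α c₁ c₂ c₃ c₄)) x y t
        - 2 * px (px (py (py (Φ α c₁ c₂ c₃ c₄)))) x y t
        - px (px (px (px (Φ α c₁ c₂ c₃ c₄)))) x y t = 0 := by
  intro x y t u
  rw [ptΦ, pyy, pxx]
  simp [px, py]
  ring
end
end

section
/- Let α ≠ 0 and consider the equation u_t = (1/2)u_x² + (1/2)u_y² + r(u)(u_xx + u_yy) − u_xxxx − 2u_xxyy − u_yyyy + αu + β with r(u) = c constant. Then for every ε, the one-parameter group generated by X₇ = (e^{αt}/α)∂_x − e^{αt}x∂_u, namely (x,y,t,u) ↦ (x + ε e^{αt}/α, y, t, u − ε e^{αt}x − (ε²/2)e^{2αt}/α), maps solutions to solutions: if u is a smooth solution of the equation then v(x,y,t) := u(x − ε e^{αt}/α, y, t) − ε e^{αt}(x − ε e^{αt}/α) − (ε²/(2α))e^{2αt} also solves it. -/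
noncomputable section

/-- `u` solves `u_t = (1/2)u_x² + (1/2)u_y² + c(u_xx + u_yy) − u_xxxx − 2u_xxyy
− u_yyyy + αu + β`. -/
def IsSolLin (α β c : ℝ) (u : ℝ → ℝ → ℝ → ℝ) : Prop :=
  ∀ x y t : ℝ,
    pt u x y t = (1 / 2) * (px u x y t) ^ 2 + (1 / 2) * (py u x y t) ^ 2
      + c * (px (px u) x y t + py (py u) x y t)
      - px (px (px (px u))) x y t - 2 * px (px (py (py u))) x y t
      - py (py (py (py u))) x y t + α * u x y t + β

/-- The flow of `X₇ = (e^{αt}/α)∂_x − e^{αt}x∂_u` maps solutions to solutions: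
if `u` solves the equation, so does
`v(x,y,t) = u(x − εe^{αt}/α, y, t) − εe^{αt}(x − εe^{αt}/α) − (ε²/(2α))e^{2αt}`. -/
theorem generalized_galilean_symmetry
    (α β c : ℝ) (hα : α ≠ 0) (u : ℝ → ℝ → ℝ → ℝ)
    (hu : ContDiff ℝ (⊤ : ℕ∞) (fun p : ℝ × ℝ × ℝ => u p.1 p.2.1 p.2.2))
    (hsol : IsSolLin α β c u) (ε : ℝ) :
    IsSolLin α β c (fun x y t =>
      u (x - ε * Real.exp (α * t) / α) y t
        - ε * Real.exp (α * t) * (x - ε * Real.exp (α * t) / α)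
        - (ε ^ 2 / (2 * α)) * Real.exp (2 * α * t)) := by
  set F : ℝ × ℝ × ℝ → ℝ := fun p => u p.1 p.2.1 p.2.2 with hFdef
  have hF : ContDiff ℝ (⊤ : ℕ∞) F := hu
  have hdx : ∀ y t : ℝ, Differentiable ℝ (fun s => u s y t) := by
    intro y t
    have : ContDiff ℝ (⊤ : ℕ∞) (fun s : ℝ => F (s, y, t)) :=
      hF.comp (ContDiff.prodMk contDiff_id contDiff_const)
    exact this.differentiable (by simp)
  -- partial derivatives as directional fderiv of F
  have hpx : ∀ x y t : ℝ, px u x y t = fderiv ℝ F (x, y, t) (1, 0, 0) := by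
    intro x y t
    have hg : HasDerivAt (fun s : ℝ => ((s, (y, t)) : ℝ × ℝ × ℝ)) (1, 0) x :=
      (hasDerivAt_id x).prodMk (hasDerivAt_const x (y, t))
    have := ((hF.differentiable (by simp) (x, y, t)).hasFDerivAt).comp_hasDerivAt x hg
    simpa [px, Function.comp_def, F, Prod.mk_zero_zero] using this.deriv
  have hpt : ∀ x y t : ℝ, pt u x y t = fderiv ℝ F (x, y, t) (0, 0, 1) := by
    intro x y t
    have hg : HasDerivAt (fun s : ℝ => ((x, (y, s)) : ℝ × ℝ × ℝ)) (0, 0, 1) t :=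
      (hasDerivAt_const t x).prodMk ((hasDerivAt_const t y).prodMk (hasDerivAt_id t))
    have := ((hF.differentiable (by simp) (x, y, t)).hasFDerivAt).comp_hasDerivAt t hg
    simpa [pt, Function.comp_def, F] using this.deriv
  set V : ℝ → ℝ → ℝ → ℝ := fun x y t =>
      u (x - ε * Real.exp (α * t) / α) y t
        - ε * Real.exp (α * t) * (x - ε * Real.exp (α * t) / α)
        - (ε ^ 2 / (2 * α)) * Real.exp (2 * α * t) with hV
  -- first x derivative
  have h1 : ∀ x y t : ℝ, px V x y t
      = px u (x - ε * Real.exp (α * t) / α) y t - ε * Real.exp (α * t) := by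
    intro x y t
    have hA : HasDerivAt (fun s => u (s - ε * Real.exp (α * t) / α) y t)
        (px u (x - ε * Real.exp (α * t) / α) y t) x := by
      have hu1 : HasDerivAt (fun s => u s y t)
          (deriv (fun s => u s y t) (x - ε * Real.exp (α * t) / α))
          (x - ε * Real.exp (α * t) / α) := (hdx y t _).hasDerivAt
      have hin : HasDerivAt (fun s : ℝ => s - ε * Real.exp (α * t) / α) 1 x :=
        (hasDerivAt_id x).sub_const _
      simpa [px, Function.comp_def] using hu1.comp x hin
    have hB : HasDerivAt (fun s : ℝ => ε * Real.exp (α * t) * (s - ε * Real.exp (α * t) / α))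
        (ε * Real.exp (α * t)) x := by
      simpa using ((hasDerivAt_id x).sub_const (ε * Real.exp (α * t) / α)).const_mul
        (ε * Real.exp (α * t))
    have := ((hA.sub hB).sub_const ((ε ^ 2 / (2 * α)) * Real.exp (2 * α * t))).deriv
    simpa [px, hV] using this
  -- higher x derivatives (unconditional shifts)
  have h2 : ∀ x y t : ℝ, px (px V) x y t = px (px u) (x - ε * Real.exp (α * t) / α) y t := by
    intro x y t
    show deriv (fun s => px V s y t) x = _
    have : (fun s => px V s y t)
        = fun s => px u (s - ε * Real.exp (α * t) / α) y t - ε * Real.exp (α * t) :=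
      funext fun s => h1 s y t
    rw [this, deriv_sub_const,
      deriv_comp_sub_const (fun s => px u s y t) (ε * Real.exp (α * t) / α) x]
    rfl
  have h3 : ∀ x y t : ℝ,
      px (px (px V)) x y t = px (px (px u)) (x - ε * Real.exp (α * t) / α) y t := by
    intro x y t
    show deriv (fun s => px (px V) s y t) x = _
    have : (fun s => px (px V) s y t)
        = fun s => px (px u) (s - ε * Real.exp (α * t) / α) y t := funext fun s => h2 s y t
    rw [this, deriv_comp_sub_const (fun s => px (px u) s y t) (ε * Real.exp (α * t) / α) x]
    rfl
  have h4 : ∀ x y t : ℝ,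
      px (px (px (px V))) x y t = px (px (px (px u))) (x - ε * Real.exp (α * t) / α) y t := by
    intro x y t
    show deriv (fun s => px (px (px V)) s y t) x = _
    have : (fun s => px (px (px V)) s y t)
        = fun s => px (px (px u)) (s - ε * Real.exp (α * t) / α) y t :=
      funext fun s => h3 s y t
    rw [this, deriv_comp_sub_const (fun s => px (px (px u)) s y t) (ε * Real.exp (α * t) / α) x]
    rfl
  -- y derivatives
  have k1 : ∀ x y t : ℝ, py V x y t = py u (x - ε * Real.exp (α * t) / α) y t := by
    intro x y t
    show deriv (fun s => V x s t) y = _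
    have : (fun s => V x s t)
        = fun s => u (x - ε * Real.exp (α * t) / α) s t
          - (ε * Real.exp (α * t) * (x - ε * Real.exp (α * t) / α)
              + (ε ^ 2 / (2 * α)) * Real.exp (2 * α * t)) := by
      funext s; simp [hV]; ring
    rw [this, deriv_sub_const]
    rfl
  have k2 : ∀ x y t : ℝ,
      py (py V) x y t = py (py u) (x - ε * Real.exp (α * t) / α) y t := by
    intro x y t
    show deriv (fun s => py V x s t) y = _
    have : (fun s => py V x s t)
        = fun s => py u (x - ε * Real.exp (α * t) / α) s t := funext fun s => k1 x s t
    rw [this]; rfl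
  have k3 : ∀ x y t : ℝ,
      py (py (py V)) x y t = py (py (py u)) (x - ε * Real.exp (α * t) / α) y t := by
    intro x y t
    show deriv (fun s => py (py V) x s t) y = _
    have : (fun s => py (py V) x s t)
        = fun s => py (py u) (x - ε * Real.exp (α * t) / α) s t := funext fun s => k2 x s t
    rw [this]; rfl
  have k4 : ∀ x y t : ℝ,
      py (py (py (py V))) x y t = py (py (py (py u))) (x - ε * Real.exp (α * t) / α) y t := by
    intro x y t
    show deriv (fun s => py (py (py V)) x s t) y = _
    have : (fun s => py (py (py V)) x s t)
        = fun s => py (py (py u)) (x - ε * Real.exp (α * t) / α) s t := funext fun s => k3 x s t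
    rw [this]; rfl
  -- mixed derivatives
  have m1 : ∀ x y t : ℝ,
      px (py (py V)) x y t = px (py (py u)) (x - ε * Real.exp (α * t) / α) y t := by
    intro x y t
    show deriv (fun s => py (py V) s y t) x = _
    have : (fun s => py (py V) s y t)
        = fun s => py (py u) (s - ε * Real.exp (α * t) / α) y t := funext fun s => k2 s y t
    rw [this, deriv_comp_sub_const (fun s => py (py u) s y t) (ε * Real.exp (α * t) / α) x]
    rfl
  have m2 : ∀ x y t : ℝ,
      px (px (py (py V))) x y t = px (px (py (py u))) (x - ε * Real.exp (α * t) / α) y t := by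
    intro x y t
    show deriv (fun s => px (py (py V)) s y t) x = _
    have : (fun s => px (py (py V)) s y t)
        = fun s => px (py (py u)) (s - ε * Real.exp (α * t) / α) y t := funext fun s => m1 s y t
    rw [this, deriv_comp_sub_const (fun s => px (py (py u)) s y t) (ε * Real.exp (α * t) / α) x]
    rfl
  -- time derivative
  have ht : ∀ x y t : ℝ, pt V x y t
      = pt u (x - ε * Real.exp (α * t) / α) y t
        - ε * Real.exp (α * t) * px u (x - ε * Real.exp (α * t) / α) y t
        - α * (ε * Real.exp (α * t)) * (x - ε * Real.exp (α * t) / α) := by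
    intro x y t
    have hexp : HasDerivAt (fun s => Real.exp (α * s)) (Real.exp (α * t) * α) t := by
      simpa using ((hasDerivAt_id t).const_mul α).exp
    have ha : HasDerivAt (fun s => x - ε * Real.exp (α * s) / α)
        (-(ε * Real.exp (α * t))) t := by
      have h0 := (((hexp.const_mul ε).div_const α).const_sub x)
      have h' : -(ε * (Real.exp (α * t) * α) / α) = -(ε * Real.exp (α * t)) := by
        field_simp
      rw [h'] at h0; exact h0
    have hg : HasDerivAt (fun s : ℝ =>
        ((x - ε * Real.exp (α * s) / α, (y, s)) : ℝ × ℝ × ℝ))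
        (-(ε * Real.exp (α * t)), (0, 1)) t :=
      ha.prodMk ((hasDerivAt_const t y).prodMk (hasDerivAt_id t))
    have hA : HasDerivAt (fun s => u (x - ε * Real.exp (α * s) / α) y s)
        (fderiv ℝ F (x - ε * Real.exp (α * t) / α, y, t) (-(ε * Real.exp (α * t)), 0, 1)) t :=
      by have := ((hF.differentiable (by simp) (x - ε * Real.exp (α * t) / α, y, t)).hasFDerivAt).comp_hasDerivAt t hg; exact this
    have hlin : fderiv ℝ F (x - ε * Real.exp (α * t) / α, y, t) (-(ε * Real.exp (α * t)), 0, 1)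
        = -(ε * Real.exp (α * t)) * fderiv ℝ F (x - ε * Real.exp (α * t) / α, y, t) (1, 0, 0)
          + fderiv ℝ F (x - ε * Real.exp (α * t) / α, y, t) (0, 0, 1) := by
      have hv : ((-(ε * Real.exp (α * t)) : ℝ), (0 : ℝ), (1 : ℝ))
          = (-(ε * Real.exp (α * t))) • ((1 : ℝ), (0 : ℝ), (0 : ℝ))
            + ((0 : ℝ), (0 : ℝ), (1 : ℝ)) := by
        simp [Prod.ext_iff]
      rw [hv, map_add, map_smul]
      simp [smul_eq_mul]
    have hB : HasDerivAt
        (fun s => ε * Real.exp (α * s) * (x - ε * Real.exp (α * s) / α))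
        (ε * (Real.exp (α * t) * α) * (x - ε * Real.exp (α * t) / α)
          + ε * Real.exp (α * t) * (-(ε * Real.exp (α * t)))) t :=
      (hexp.const_mul ε).mul ha
    have hC : HasDerivAt (fun s => (ε ^ 2 / (2 * α)) * Real.exp (2 * α * s))
        ((ε ^ 2 / (2 * α)) * (Real.exp (2 * α * t) * (2 * α))) t := by
      simpa using (((hasDerivAt_id t).const_mul (2 * α)).exp).const_mul (ε ^ 2 / (2 * α))
    have hD := ((hA.sub hB).sub hC).deriv
    simp only [Pi.sub_def] at hD
    have hVs : (fun s => V x y s)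
        = fun s => u (x - ε * Real.exp (α * s) / α) y s
          - ε * Real.exp (α * s) * (x - ε * Real.exp (α * s) / α)
          - (ε ^ 2 / (2 * α)) * Real.exp (2 * α * s) := rfl
    show deriv (fun s => V x y s) t = _
    rw [hVs, hD, hlin, ← hpx, ← hpt]
    have he : (ε ^ 2 / (2 * α)) * (Real.exp (2 * α * t) * (2 * α))
        = ε * Real.exp (α * t) * (ε * Real.exp (α * t)) := by
      have h2 : Real.exp (2 * α * t) = Real.exp (α * t) * Real.exp (α * t) := by
        rw [← Real.exp_add]; ring_nf
      rw [h2]; field_simp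
    rw [he]
    ring
  -- conclude
  intro x y t
  have hs := hsol (x - ε * Real.exp (α * t) / α) y t
  rw [ht x y t, h1 x y t, k1 x y t, h2 x y t, k2 x y t, h4 x y t, m2 x y t, k4 x y t, hs]
  have h2exp : Real.exp (2 * α * t) = Real.exp (α * t) * Real.exp (α * t) := by
    rw [← Real.exp_add]; ring_nf
  have hVval : V x y t = u (x - ε * Real.exp (α * t) / α) y t
      - ε * Real.exp (α * t) * (x - ε * Real.exp (α * t) / α)
      - (ε ^ 2 / (2 * α)) * Real.exp (2 * α * t) := rfl
  rw [hVval, h2exp]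
  field_simp
  ring
end
end

section
/- Conservation law verification (nonlinear self-adjoint case 2.5, y-translation): let α, β, γ ∈ ℝ, g smooth, and let u be a smooth solution of u_t = αu + β + g'(u)u_y² + g(u)u_yy − u_yyyy + (1/2)u_x² + (γ + u/2)u_xx − 2u_xxyy − u_xxxx. Set C = c₁ + c₂x and define C¹ = (1/4)e^{−αt}(c₂u² − 4γC u_x + 2u(2γc₂ − C u_x) − 4c₂u_xx + 4C u_xxx), C² = e^{−αt}C(u_yyy + 2u_xxy − βy − g(u)u_y), C³ = e^{−αt}C u. Then ∂_x C¹ + ∂_y C² + ∂_t C³ = 0 at every point (x,y,t), for all real constants c₁, c₂. The conserved vector is nontrivial whenever c₁² + c₂² ≠ 0. -/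
noncomputable section

/-! ### Auxiliary machinery: directional derivatives on `ℝ × ℝ × ℝ` -/

def Dd (v : ℝ × ℝ × ℝ) (F : ℝ × ℝ × ℝ → ℝ) : ℝ × ℝ × ℝ → ℝ := fun p => fderiv ℝ F p v

def UU (u : ℝ → ℝ → ℝ → ℝ) : ℝ × ℝ × ℝ → ℝ := fun p => u p.1 p.2.1 p.2.2

def e₁ : ℝ × ℝ × ℝ := (1, 0, 0)
def e₂ : ℝ × ℝ × ℝ := (0, 1, 0)
def e₃ : ℝ × ℝ × ℝ := (0, 0, 1)

lemma Dd_contDiff {F : ℝ × ℝ × ℝ → ℝ} (hF : ContDiff ℝ (⊤ : ℕ∞) F) (v : ℝ × ℝ × ℝ) :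
    ContDiff ℝ (⊤ : ℕ∞) (Dd v F) :=
  (hF.fderiv_right (by simp)).clm_apply contDiff_const

lemma sliceX {F : ℝ × ℝ × ℝ → ℝ} (hF : ContDiff ℝ (⊤ : ℕ∞) F) (x y t : ℝ) :
    HasDerivAt (fun s => F (s, y, t)) (Dd e₁ F (x, y, t)) x := by
  have h := ((hF.differentiable (by simp)) (x, y, t)).hasFDerivAt
  have hl : HasDerivAt (fun s : ℝ => ((s, y, t) : ℝ × ℝ × ℝ)) ((1:ℝ), (0:ℝ), (0:ℝ)) x :=
    (hasDerivAt_id x).prodMk ((hasDerivAt_const x y).prodMk (hasDerivAt_const x t))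
  simpa [Dd, e₁, Function.comp_def] using h.comp_hasDerivAt x hl

lemma sliceY {F : ℝ × ℝ × ℝ → ℝ} (hF : ContDiff ℝ (⊤ : ℕ∞) F) (x y t : ℝ) :
    HasDerivAt (fun s => F (x, s, t)) (Dd e₂ F (x, y, t)) y := by
  have h := ((hF.differentiable (by simp)) (x, y, t)).hasFDerivAt
  have hl : HasDerivAt (fun s : ℝ => ((x, s, t) : ℝ × ℝ × ℝ)) ((0:ℝ), (1:ℝ), (0:ℝ)) y :=
    (hasDerivAt_const y x).prodMk ((hasDerivAt_id y).prodMk (hasDerivAt_const y t))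
  simpa [Dd, e₂, Function.comp_def] using h.comp_hasDerivAt y hl

lemma sliceT {F : ℝ × ℝ × ℝ → ℝ} (hF : ContDiff ℝ (⊤ : ℕ∞) F) (x y t : ℝ) :
    HasDerivAt (fun s => F (x, y, s)) (Dd e₃ F (x, y, t)) t := by
  have h := ((hF.differentiable (by simp)) (x, y, t)).hasFDerivAt
  have hl : HasDerivAt (fun s : ℝ => ((x, y, s) : ℝ × ℝ × ℝ)) ((0:ℝ), (0:ℝ), (1:ℝ)) t :=
    (hasDerivAt_const t x).prodMk ((hasDerivAt_const t y).prodMk (hasDerivAt_id t))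
  simpa [Dd, e₃, Function.comp_def] using h.comp_hasDerivAt t hl

lemma pxF {F : ℝ × ℝ × ℝ → ℝ} (hF : ContDiff ℝ (⊤ : ℕ∞) F) :
    px (fun a b c => F (a, b, c)) = fun a b c => Dd e₁ F (a, b, c) :=
  funext fun x => funext fun y => funext fun t => (sliceX hF x y t).deriv

lemma pyF {F : ℝ × ℝ × ℝ → ℝ} (hF : ContDiff ℝ (⊤ : ℕ∞) F) :
    py (fun a b c => F (a, b, c)) = fun a b c => Dd e₂ F (a, b, c) :=
  funext fun x => funext fun y => funext fun t => (sliceY hF x y t).deriv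

lemma ptF {F : ℝ × ℝ × ℝ → ℝ} (hF : ContDiff ℝ (⊤ : ℕ∞) F) :
    pt (fun a b c => F (a, b, c)) = fun a b c => Dd e₃ F (a, b, c) :=
  funext fun x => funext fun y => funext fun t => (sliceT hF x y t).deriv

lemma Dd_comm {F : ℝ × ℝ × ℝ → ℝ} (hF : ContDiff ℝ (⊤ : ℕ∞) F) (v w : ℝ × ℝ × ℝ) :
    Dd v (Dd w F) = Dd w (Dd v F) := by
  funext p
  have hdF : ∀ q, HasFDerivAt F (fderiv ℝ F q) q := fun q =>
    ((hF.differentiable (by simp)) q).hasFDerivAt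
  have hd2 : HasFDerivAt (fderiv ℝ F) (fderiv ℝ (fderiv ℝ F) p) p :=
    (((hF.fderiv_right (m := (⊤ : ℕ∞)) (by simp)).differentiable (by simp)) p).hasFDerivAt
  have hsymm := second_derivative_symmetric hdF hd2
  have key : ∀ a b : ℝ × ℝ × ℝ, Dd a (Dd b F) p = fderiv ℝ (fderiv ℝ F) p a b := by
    intro a b
    have hb : HasFDerivAt (Dd b F)
        ((ContinuousLinearMap.apply ℝ ℝ b).comp (fderiv ℝ (fderiv ℝ F) p)) p :=
      (ContinuousLinearMap.apply ℝ ℝ b).hasFDerivAt.comp p hd2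
    show fderiv ℝ (Dd b F) p a = _
    rw [hb.fderiv]
    rfl
  rw [key v w, key w v]
  exact hsymm v w

/-- Conservation law for the nonlinear self-adjoint case
`u_t = αu + β + g'(u)u_y² + g(u)u_yy − u_yyyy + (1/2)u_x² + (γ + u/2)u_xx −
2u_xxyy − u_xxxx`, y-translation symmetry: with `C = c₁ + c₂x` the stated
vector `(C¹, C², C³)` is divergence free along every smooth solution. -/
theorem conservation_law_y_translation
    (α β γ : ℝ) (g : ℝ → ℝ) (hg : ContDiff ℝ (⊤ : ℕ∞) g)
    (u : ℝ → ℝ → ℝ → ℝ)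
    (hu : ContDiff ℝ (⊤ : ℕ∞) (fun p : ℝ × ℝ × ℝ => u p.1 p.2.1 p.2.2))
    (hsol : ∀ x y t : ℝ,
      pt u x y t = α * u x y t + β + deriv g (u x y t) * (py u x y t) ^ 2
        + g (u x y t) * py (py u) x y t - py (py (py (py u))) x y t
        + (1 / 2) * (px u x y t) ^ 2 + (γ + u x y t / 2) * px (px u) x y t
        - 2 * px (px (py (py u))) x y t - px (px (px (px u))) x y t)
    (c₁ c₂ : ℝ) :
    ∀ x y t : ℝ,
      px (fun x y t =>
        (1 / 4) * Real.exp (-α * t) *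
          (c₂ * (u x y t) ^ 2 - 4 * γ * (c₁ + c₂ * x) * px u x y t
            + 2 * u x y t * (2 * γ * c₂ - (c₁ + c₂ * x) * px u x y t)
            - 4 * c₂ * px (px u) x y t
            + 4 * (c₁ + c₂ * x) * px (px (px u)) x y t)) x y t
      + py (fun x y t =>
        Real.exp (-α * t) * (c₁ + c₂ * x) *
          (py (py (py u)) x y t + 2 * px (px (py u)) x y t - β * y
            - g (u x y t) * py u x y t)) x y t
      + pt (fun x y t =>
        Real.exp (-α * t) * (c₁ + c₂ * x) * u x y t) x y t = 0 := by
  intro x y t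
  have A0 : ContDiff ℝ (⊤ : ℕ∞) (UU u) := hu
  have A1 : ContDiff ℝ (⊤ : ℕ∞) (Dd e₁ (UU u)) := Dd_contDiff A0 e₁
  have A2 : ContDiff ℝ (⊤ : ℕ∞) (Dd e₂ (UU u)) := Dd_contDiff A0 e₂
  have A11 : ContDiff ℝ (⊤ : ℕ∞) (Dd e₁ (Dd e₁ (UU u))) := Dd_contDiff A1 e₁
  have A12 : ContDiff ℝ (⊤ : ℕ∞) (Dd e₁ (Dd e₂ (UU u))) := Dd_contDiff A2 e₁
  have A22 : ContDiff ℝ (⊤ : ℕ∞) (Dd e₂ (Dd e₂ (UU u))) := Dd_contDiff A2 e₂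
  have A111 : ContDiff ℝ (⊤ : ℕ∞) (Dd e₁ (Dd e₁ (Dd e₁ (UU u)))) := Dd_contDiff A11 e₁
  have A112 : ContDiff ℝ (⊤ : ℕ∞) (Dd e₁ (Dd e₁ (Dd e₂ (UU u)))) := Dd_contDiff A12 e₁
  have A122 : ContDiff ℝ (⊤ : ℕ∞) (Dd e₁ (Dd e₂ (Dd e₂ (UU u)))) := Dd_contDiff A22 e₁
  have A222 : ContDiff ℝ (⊤ : ℕ∞) (Dd e₂ (Dd e₂ (Dd e₂ (UU u)))) := Dd_contDiff A22 e₂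
  -- rewrite all the curried partial derivatives into directional-derivative form
  have rx : px u = fun a b c => Dd e₁ (UU u) (a, b, c) := pxF A0
  have ry : py u = fun a b c => Dd e₂ (UU u) (a, b, c) := pyF A0
  have rt : pt u = fun a b c => Dd e₃ (UU u) (a, b, c) := ptF A0
  have rxx : px (fun a b c => Dd e₁ (UU u) (a, b, c))
      = fun a b c => Dd e₁ (Dd e₁ (UU u)) (a, b, c) := pxF A1
  have rx2 : px (fun a b c => Dd e₂ (UU u) (a, b, c))
      = fun a b c => Dd e₁ (Dd e₂ (UU u)) (a, b, c) := pxF A2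
  have ryy : py (fun a b c => Dd e₂ (UU u) (a, b, c))
      = fun a b c => Dd e₂ (Dd e₂ (UU u)) (a, b, c) := pyF A2
  have rxxx : px (fun a b c => Dd e₁ (Dd e₁ (UU u)) (a, b, c))
      = fun a b c => Dd e₁ (Dd e₁ (Dd e₁ (UU u))) (a, b, c) := pxF A11
  have rx12 : px (fun a b c => Dd e₁ (Dd e₂ (UU u)) (a, b, c))
      = fun a b c => Dd e₁ (Dd e₁ (Dd e₂ (UU u))) (a, b, c) := pxF A12
  have rx22 : px (fun a b c => Dd e₂ (Dd e₂ (UU u)) (a, b, c))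
      = fun a b c => Dd e₁ (Dd e₂ (Dd e₂ (UU u))) (a, b, c) := pxF A22
  have ryyy : py (fun a b c => Dd e₂ (Dd e₂ (UU u)) (a, b, c))
      = fun a b c => Dd e₂ (Dd e₂ (Dd e₂ (UU u))) (a, b, c) := pyF A22
  have rxxxx : px (fun a b c => Dd e₁ (Dd e₁ (Dd e₁ (UU u))) (a, b, c))
      = fun a b c => Dd e₁ (Dd e₁ (Dd e₁ (Dd e₁ (UU u)))) (a, b, c) := pxF A111
  have rx122 : px (fun a b c => Dd e₁ (Dd e₂ (Dd e₂ (UU u))) (a, b, c))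
      = fun a b c => Dd e₁ (Dd e₁ (Dd e₂ (Dd e₂ (UU u)))) (a, b, c) := pxF A122
  have ryyyy : py (fun a b c => Dd e₂ (Dd e₂ (Dd e₂ (UU u))) (a, b, c))
      = fun a b c => Dd e₂ (Dd e₂ (Dd e₂ (Dd e₂ (UU u)))) (a, b, c) := pyF A222
  have hsol' := hsol x y t
  simp only [rx, ry, rt, rxx, rx2, ryy, rxxx, rx12, rx22, ryyy, rxxxx, rx122, ryyyy]
    at hsol' ⊢
  simp only [px, py, pt]
  -- derivative of C¹ in x
  have hA : HasDerivAt (fun s => u s y t) (Dd e₁ (UU u) (x, y, t)) x := sliceX A0 x y t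
  have hB1 : HasDerivAt (fun s => Dd e₁ (UU u) (s, y, t))
      (Dd e₁ (Dd e₁ (UU u)) (x, y, t)) x := sliceX A1 x y t
  have hB2 : HasDerivAt (fun s => Dd e₁ (Dd e₁ (UU u)) (s, y, t))
      (Dd e₁ (Dd e₁ (Dd e₁ (UU u))) (x, y, t)) x := sliceX A11 x y t
  have hB3 : HasDerivAt (fun s => Dd e₁ (Dd e₁ (Dd e₁ (UU u))) (s, y, t))
      (Dd e₁ (Dd e₁ (Dd e₁ (Dd e₁ (UU u)))) (x, y, t)) x := sliceX A111 x y t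
  have hLin : HasDerivAt (fun s : ℝ => c₁ + c₂ * s) c₂ x := by
    simpa using ((hasDerivAt_id x).const_mul c₂).const_add c₁
  have hbig1 := ((((((hA.pow 2).const_mul c₂).sub
      ((hLin.const_mul (4 * γ)).mul hB1)).add
      ((hA.const_mul 2).mul ((hasDerivAt_const x (2 * γ * c₂)).sub (hLin.mul hB1)))).sub
      (hB2.const_mul (4 * c₂))).add
      ((hLin.const_mul 4).mul hB3)).const_mul (1 / 4 * Real.exp (-α * t))
  -- derivative of C² in y
  have hYA : HasDerivAt (fun s => u x s t) (Dd e₂ (UU u) (x, y, t)) y := sliceY A0 x y t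
  have hY1 : HasDerivAt (fun s => Dd e₂ (UU u) (x, s, t))
      (Dd e₂ (Dd e₂ (UU u)) (x, y, t)) y := sliceY A2 x y t
  have hY3 : HasDerivAt (fun s => Dd e₂ (Dd e₂ (Dd e₂ (UU u))) (x, s, t))
      (Dd e₂ (Dd e₂ (Dd e₂ (Dd e₂ (UU u)))) (x, y, t)) y := sliceY A222 x y t
  have hYmix : HasDerivAt (fun s => Dd e₁ (Dd e₁ (Dd e₂ (UU u))) (x, s, t))
      (Dd e₂ (Dd e₁ (Dd e₁ (Dd e₂ (UU u)))) (x, y, t)) y := sliceY A112 x y t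
  have hYg : HasDerivAt (fun s => g (u x s t))
      (deriv g (u x y t) * Dd e₂ (UU u) (x, y, t)) y :=
    HasDerivAt.comp y ((hg.differentiable (by simp) (u x y t)).hasDerivAt) hYA
  have hYlin : HasDerivAt (fun s : ℝ => β * s) β y := by
    simpa using (hasDerivAt_id y).const_mul β
  have hbig2 := (((hY3.add (hYmix.const_mul 2)).sub hYlin).sub
      (hYg.mul hY1)).const_mul (Real.exp (-α * t) * (c₁ + c₂ * x))
  -- derivative of C³ in t
  have hTu : HasDerivAt (fun s => u x y s) (Dd e₃ (UU u) (x, y, t)) t := sliceT A0 x y t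
  have htlin : HasDerivAt (fun s : ℝ => -α * s) (-α) t := by
    simpa using (hasDerivAt_id t).const_mul (-α)
  have hexp : HasDerivAt (fun s : ℝ => Real.exp (-α * s)) (Real.exp (-α * t) * (-α)) t :=
    htlin.exp
  have hbig3 := (hexp.mul_const (c₁ + c₂ * x)).mul hTu
  erw [hbig1.deriv, hbig2.deriv, hbig3.deriv]
  -- commute mixed partial derivatives
  have hc1 : Dd e₂ (Dd e₁ (Dd e₁ (Dd e₂ (UU u))))
      = Dd e₁ (Dd e₂ (Dd e₁ (Dd e₂ (UU u)))) := Dd_comm A12 e₂ e₁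
  have hc2 : Dd e₂ (Dd e₁ (Dd e₂ (UU u))) = Dd e₁ (Dd e₂ (Dd e₂ (UU u))) :=
    Dd_comm A2 e₂ e₁
  rw [hc1, hc2, hsol']
  simp only [Pi.sub_apply, Pi.mul_apply]
  ring
end
end
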